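/- arXiv:1510.05294 — 7 statements merged into one kernel-verified Lean document; each statement's English description precedes it below -/
import Mathlib

section
/- Let Δ = diag(d₁,d₂,d₃) with d₁,d₂,d₃ > 0 pairwise distinct. Then the set of P ∈ SO(3) satisfying ΔP = PᵀΔ is exactly {I, diag(1,−1,−1), diag(−1,1,−1), diag(−1,−1,1)}. -/
/-!
If `D = diag d` and `P` is orthogonal with `D P = Pᵀ D`, then `Pᵀ D² P = (D P)(D P) = D P Pᵀ D = D²`,
so `P` commutes with `D² = diag(d₁², d₂², d₃²)`. For positive pairwise distinct `dᵢ` the squares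
are pairwise distinct, which forces `P` to be diagonal; a diagonal matrix in `SO(3)` has entries
`±1` with product `1`.
-/

open Matrix

/-- `SO(3)`. -/
def SO3 (R : Matrix (Fin 3) (Fin 3) ℝ) : Prop :=
  Rᵀ * R = 1 ∧ R.det = 1

theorem commute_mul_self_of_mul_eq_mul {M : Type*} [Monoid M] {a p q : M}
    (h : a * p = q * a) (hpq : p * q = 1) : Commute (a * a) p := by
  have hconj : q * (a * a) * p = a * a :=
    calc q * (a * a) * p = (q * a) * (a * p) := by simp only [mul_assoc]
      _ = (a * p) * (q * a) := by rw [h]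
      _ = a * (p * q) * a := by simp only [mul_assoc]
      _ = a * a := by rw [hpq, mul_one]
  calc a * a * p = p * q * (a * a) * p := by rw [hpq, one_mul]
    _ = p * (q * (a * a) * p) := by simp only [mul_assoc]
    _ = p * (a * a) := by rw [hconj]

theorem Matrix.IsDiag.of_commute_diagonal {n R : Type*} [Fintype n] [DecidableEq n]
    [CommRing R] [NoZeroDivisors R] {e : n → R} (he : Function.Injective e)
    {M : Matrix n n R} (hM : Commute (diagonal e) M) : M.IsDiag := by
  intro i j hij
  have hentry : e i * M i j = M i j * e j := by
    simpa [diagonal_mul, mul_diagonal] using congrFun (congrFun hM.eq i) j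
  have hzero : (e i - e j) * M i j = 0 := by rw [sub_mul, hentry, mul_comm, sub_self]
  exact (mul_eq_zero.1 hzero).resolve_left (sub_ne_zero.2 (he.ne hij))

theorem SO3_diagonal_iff (s : Fin 3 → ℝ) :
    SO3 (diagonal s) ↔ (diagonal s = 1 ∨ diagonal s = diagonal ![1, -1, -1] ∨
      diagonal s = diagonal ![-1, 1, -1] ∨ diagonal s = diagonal ![-1, -1, 1]) := by
  obtain ⟨a, b, c, rfl⟩ : ∃ a b c, s = ![a, b, c] :=
    ⟨s 0, s 1, s 2, by ext i; fin_cases i <;> rfl⟩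
  have hone : (1 : Fin 3 → ℝ) = ![1, 1, 1] := by ext i; fin_cases i <;> rfl
  rw [SO3, diagonal_transpose, diagonal_mul_diagonal, ← diagonal_one', diagonal_eq_diagonal_iff,
    det_diagonal, Fin.prod_univ_three]
  simp only [diagonal_injective.eq_iff, hone, vecCons_inj, Fin.forall_fin_succ, Fin.isValue,
    cons_val_zero, cons_val_one, cons_val, cons_val_succ, IsEmpty.forall_iff, and_true,
    mul_self_eq_one_iff]
  constructor
  · rintro ⟨⟨ha | ha, hb | hb, hc | hc⟩, habc⟩ <;> subst ha hb hc <;> norm_num at *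
  · rintro (⟨rfl, rfl, rfl⟩ | ⟨rfl, rfl, rfl⟩ | ⟨rfl, rfl, rfl⟩ | ⟨rfl, rfl, rfl⟩) <;> norm_num

/-- for `Δ = diag(d₁,d₂,d₃)` with pairwise distinct positive entries,
the set of `P ∈ SO(3)` with `ΔP = PᵀΔ` is exactly
`{I, diag(1,−1,−1), diag(−1,1,−1), diag(−1,−1,1)}`. -/
theorem critical_set_diagonal (d : Fin 3 → ℝ) (hd : ∀ i, 0 < d i)
    (hdist : ∀ i j, i ≠ j → d i ≠ d j) (P : Matrix (Fin 3) (Fin 3) ℝ) :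
    (SO3 P ∧ Matrix.diagonal d * P = Pᵀ * Matrix.diagonal d) ↔
      (P = 1 ∨ P = Matrix.diagonal ![1, -1, -1] ∨
       P = Matrix.diagonal ![-1, 1, -1] ∨ P = Matrix.diagonal ![-1, -1, 1]) := by
  constructor
  · rintro ⟨hP, hdP⟩
    have hcomm : Commute (diagonal fun i => d i * d i) P := by
      simpa only [diagonal_mul_diagonal] using
        commute_mul_self_of_mul_eq_mul hdP (mul_eq_one_comm.1 hP.1)
    have hsq_inj : Function.Injective fun i => d i * d i := fun i j hij =>
      not_imp_not.1 (hdist i j) ((mul_self_inj (hd i).le (hd j).le).1 hij)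
    rw [← (IsDiag.of_commute_diagonal hsq_inj hcomm).diagonal_diag] at hP ⊢
    exact (SO3_diagonal_iff _).1 hP
  · intro h
    obtain ⟨s, rfl⟩ : ∃ s, P = diagonal s := by
      rcases h with rfl | rfl | rfl | rfl
      exacts [⟨1, diagonal_one'.symm⟩, ⟨_, rfl⟩, ⟨_, rfl⟩, ⟨_, rfl⟩]
    exact ⟨(SO3_diagonal_iff s).2 h, by rw [diagonal_transpose]; exact commute_diagonal d s⟩
end

section
/- Let K = U_E Δ U_Eᵀ with U_E ∈ O(3) and Δ = diag(d₁,d₂,d₃), dᵢ > 0 pairwise distinct. Then the critical points of Q ↦ ⟨I − Q, K⟩ on SO(3) (i.e., solutions of KQ = QᵀK) are exactly Q ∈ {I, Q₁, Q₂, Q₃} where Qᵢ = 2U_E aᵢ aᵢᵀ U_Eᵀ − I and aᵢ is the i-th standard basis vector. -/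
open Matrix

/-! Both `SO(3)` and the equation `K Q = Qᵀ K` are invariant under `Q ↦ U Q Uᵀ`, so we may take
`U_E = I` and `K = Δ`. For orthogonal `Q`, `Δ Q = Qᵀ Δ` gives `Q Δ Q = Δ`, hence `Q` commutes with
`Δ²`; the `dᵢ²` being distinct, `Q` is diagonal. A diagonal rotation has entries `±1` with product
`1`: it is `I` or has a single entry `+1`, at `i`, which is `2 aᵢ aᵢᵀ − I`. -/

namespace Matrix

theorem two_nsmul_single_sub_one {n R : Type*} [DecidableEq n] [Ring R] (k : n) :
    2 • single k k (1 : R) - 1 = diagonal (Function.update (-1) k 1) := by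
  rw [← diagonal_single, ← diagonal_one', ← diagonal_smul, diagonal_sub]
  congr 1
  ext i
  rcases eq_or_ne i k with rfl | hik
  · norm_num
  · simp [hik]

variable {n R : Type*} [Fintype n] [DecidableEq n] [CommRing R]

theorem isDiag_of_commute_diagonal [NoZeroDivisors R] {e : n → R} (he : Function.Injective e)
    {P : Matrix n n R} (h : Commute P (diagonal e)) : P.IsDiag := by
  intro i j hij
  have hij' := congrFun₂ h.eq i j
  rw [mul_diagonal, diagonal_mul] at hij'
  have : P i j * (e j - e i) = 0 := by linear_combination hij'
  exact (mul_eq_zero.mp this).resolve_right (sub_ne_zero.mpr (he.ne (Ne.symm hij)))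

theorem commute_mul_self_of_mul_eq_transpose_mul {K Q : Matrix n n R} (hQ : Qᵀ * Q = 1)
    (h : K * Q = Qᵀ * K) : Commute Q (K * K) := by
  have hQ' : Q * Qᵀ = 1 := mul_eq_one_comm.mp hQ
  have hQK : Q * K = K * Qᵀ :=
    calc Q * K = Q * (K * Q) * Qᵀ := by
          rw [Matrix.mul_assoc, Matrix.mul_assoc, hQ', Matrix.mul_one]
      _ = K * Qᵀ := by rw [h, ← Matrix.mul_assoc, hQ', Matrix.one_mul]
  calc Q * (K * K) = K * Qᵀ * K := by rw [← Matrix.mul_assoc, hQK]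
    _ = K * K * Q := by rw [Matrix.mul_assoc, ← h, Matrix.mul_assoc]

def orthogonalConj {U : Matrix n n R} (hU : Uᵀ * U = 1) : Matrix n n R ≃ₐ[R] Matrix n n R where
  toFun X := U * X * Uᵀ
  invFun X := Uᵀ * X * U
  left_inv X := by
    change Uᵀ * (U * X * Uᵀ) * U = X
    rw [← Matrix.mul_assoc, ← Matrix.mul_assoc, hU, Matrix.one_mul, Matrix.mul_assoc, hU,
      Matrix.mul_one]
  right_inv X := by
    have hU' : U * Uᵀ = 1 := mul_eq_one_comm.mp hU
    change U * (Uᵀ * X * U) * Uᵀ = X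
    rw [← Matrix.mul_assoc, ← Matrix.mul_assoc, hU', Matrix.one_mul, Matrix.mul_assoc, hU',
      Matrix.mul_one]
  map_mul' X Y := by simp only [Matrix.mul_assoc, ← Matrix.mul_assoc Uᵀ, hU, Matrix.one_mul]
  map_add' X Y := by simp only [Matrix.mul_add, Matrix.add_mul]
  commutes' r := by
    have hU' : U * Uᵀ = 1 := mul_eq_one_comm.mp hU
    simp [Algebra.algebraMap_eq_smul_one, hU']

variable {U : Matrix n n R} (hU : Uᵀ * U = 1)

theorem orthogonalConj_apply (X : Matrix n n R) : orthogonalConj hU X = U * X * Uᵀ := rfl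

theorem transpose_orthogonalConj (X : Matrix n n R) :
    (orthogonalConj hU X)ᵀ = orthogonalConj hU Xᵀ := by
  simp only [orthogonalConj_apply, transpose_mul, transpose_transpose, Matrix.mul_assoc]

theorem det_orthogonalConj (X : Matrix n n R) : (orthogonalConj hU X).det = X.det := by
  have hdet : Uᵀ.det * U.det = 1 := by rw [← det_mul, hU, det_one]
  rw [orthogonalConj_apply, det_mul, det_mul]
  linear_combination X.det * hdet

end Matrix

theorem so3_orthogonalConj_iff {U : Matrix (Fin 3) (Fin 3) ℝ} (hU : Uᵀ * U = 1)
    (P : Matrix (Fin 3) (Fin 3) ℝ) : SO3 (orthogonalConj hU P) ↔ SO3 P := by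
  simp only [SO3, transpose_orthogonalConj, ← map_mul, EmbeddingLike.map_eq_one_iff,
    det_orthogonalConj]

theorem so3_diagonal_iff (s : Fin 3 → ℝ) :
    SO3 (diagonal s) ↔ (∀ i, s i * s i = 1) ∧ ∏ i, s i = 1 := by
  simp [SO3, diagonal_mul_diagonal, det_diagonal, ← diagonal_one]

theorem fin_three_signs_iff (s : Fin 3 → ℝ) :
    ((∀ i, s i * s i = 1) ∧ ∏ i, s i = 1) ↔
      s = 1 ∨ s = Function.update (-1) 0 1 ∨ s = Function.update (-1) 1 1 ∨
        s = Function.update (-1) 2 1 := by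
  constructor
  · rintro ⟨hsq, hprod⟩
    rw [Fin.prod_univ_three] at hprod
    have hs i := mul_self_eq_one_iff.mp (hsq i)
    rcases hs 0 with h0 | h0 <;> rcases hs 1 with h1 | h1 <;> rcases hs 2 with h2 | h2 <;>
      simp only [h0, h1, h2] at hprod <;> norm_num at hprod <;>
      simp [funext_iff, Fin.forall_fin_succ, Function.update_apply, h0, h1, h2]
  · rintro (rfl | rfl | rfl | rfl) <;>
      simp [Fin.forall_fin_succ, Fin.prod_univ_three, Function.update_apply]

theorem so3_critical_diagonal_iff {d : Fin 3 → ℝ} (hd : ∀ i, 0 < d i)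
    (hdist : ∀ i j, i ≠ j → d i ≠ d j) (P : Matrix (Fin 3) (Fin 3) ℝ) :
    (SO3 P ∧ diagonal d * P = Pᵀ * diagonal d) ↔
      (P = 1 ∨ P = 2 • single 0 0 (1 : ℝ) - 1 ∨ P = 2 • single 1 1 (1 : ℝ) - 1 ∨
        P = 2 • single 2 2 (1 : ℝ) - 1) := by
  have hsq : Function.Injective fun i => d i * d i := fun i j hij => by
    by_contra hne
    exact hdist i j hne ((mul_self_inj (hd i).le (hd j).le).mp hij)
  simp only [two_nsmul_single_sub_one]
  rw [← diagonal_one']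
  constructor
  · rintro ⟨hP, h⟩
    have hcomm := commute_mul_self_of_mul_eq_transpose_mul hP.1 h
    rw [diagonal_mul_diagonal] at hcomm
    obtain ⟨s, rfl⟩ : ∃ s, P = diagonal s :=
      ⟨_, (isDiag_of_commute_diagonal hsq hcomm).diagonal_diag.symm⟩
    rcases (fin_three_signs_iff s).mp ((so3_diagonal_iff s).mp hP) with rfl | rfl | rfl | rfl <;>
      simp only [true_or, or_true]
  · rintro (rfl | rfl | rfl | rfl) <;>
      exact ⟨(so3_diagonal_iff _).mpr ((fin_three_signs_iff _).mpr (by simp)),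
        by rw [diagonal_transpose, (commute_diagonal _ _).eq]⟩

/-- with `K = U_E Δ U_Eᵀ`, `U_E ∈ O(3)`, `Δ = diag(d₁,d₂,d₃)` with pairwise
distinct positive entries, the critical points of `Q ↦ ⟨I − Q, K⟩` on `SO(3)` (the solutions
of `KQ = QᵀK`) are exactly `{I, Q₁, Q₂, Q₃}` where `Qᵢ = 2 U_E aᵢ aᵢᵀ U_Eᵀ − I`. -/
theorem critical_points_wahba (UE : Matrix (Fin 3) (Fin 3) ℝ) (hUE : UEᵀ * UE = 1)
    (d : Fin 3 → ℝ) (hd : ∀ i, 0 < d i) (hdist : ∀ i j, i ≠ j → d i ≠ d j)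
    (Q : Matrix (Fin 3) (Fin 3) ℝ) :
    (SO3 Q ∧ (UE * Matrix.diagonal d * UEᵀ) * Q = Qᵀ * (UE * Matrix.diagonal d * UEᵀ)) ↔
      (Q = 1 ∨
       Q = 2 • (UE * Matrix.single 0 0 (1 : ℝ) * UEᵀ) - 1 ∨
       Q = 2 • (UE * Matrix.single 1 1 (1 : ℝ) * UEᵀ) - 1 ∨
       Q = 2 • (UE * Matrix.single 2 2 (1 : ℝ) * UEᵀ) - 1) := by
  obtain ⟨P, rfl⟩ := (orthogonalConj hUE).surjective Q
  simp only [← orthogonalConj_apply hUE, so3_orthogonalConj_iff, transpose_orthogonalConj,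
    ← map_mul, EmbeddingLike.apply_eq_iff_eq, ← AlgEquiv.eq_symm_apply, map_sub,
    map_nsmul, map_one, AlgEquiv.symm_apply_apply]
  exact so3_critical_diagonal_iff hd hdist P
end

section
/- With K as in the previous setting (symmetric positive definite with distinct eigenvalues), the function Q ↦ ⟨I − Q, K⟩ on SO(3) is a Morse function: its critical points are isolated and nondegenerate. -/
open Matrix

/-- The hat map `(·)^× : ℝ³ → 𝔰𝔬(3)`. -/
def hat (v : Fin 3 → ℝ) : Matrix (Fin 3) (Fin 3) ℝ :=
  !![0, -v 2, v 1; v 2, 0, -v 0; -v 1, v 0, 0]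

lemma hess_eq (N : Matrix (Fin 3) (Fin 3) ℝ) (σ σ' : Fin 3 → ℝ) :
    -((Nᵀ * (hat σ * hat σ' + hat σ' * hat σ)).trace) / 2
      = (σ ⬝ᵥ σ') * N.trace - (σ ⬝ᵥ ((N + Nᵀ) *ᵥ σ')) / 2 := by
  simp [hat, Matrix.trace, Matrix.diag, Matrix.mul_apply, Matrix.add_apply,
    Matrix.transpose_apply, Matrix.mulVec, dotProduct, Fin.sum_univ_three]
  ring

lemma tb (a b x : ℝ) (ha : a * a ≤ 1) (hb : b * b ≤ 1) (hx : |x| < 1/9) :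
    |a * x * b| < 1/9 := by
  have ha' : |a| ≤ 1 := abs_le_one_iff_mul_self_le_one.mpr ha
  have hb' : |b| ≤ 1 := abs_le_one_iff_mul_self_le_one.mpr hb
  calc |a * x * b| = |a| * |x| * |b| := by rw [abs_mul, abs_mul]
    _ ≤ 1 * |x| * 1 := by
        apply mul_le_mul (mul_le_mul ha' le_rfl (abs_nonneg x) zero_le_one) hb'
          (abs_nonneg b)
        positivity
    _ = |x| := by ring
    _ < 1/9 := hx

lemma sum_ne (x y a b : ℝ) (hx : 0 < x) (hy : 0 < y) (hxy : x ≠ y)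
    (ha : a = 1 ∨ a = -1) (hb : b = 1 ∨ b = -1) : a * x + b * y ≠ 0 := by
  rcases ha with h|h <;> rcases hb with h'|h' <;> subst h <;> subst h' <;> intro hc <;>
    first
      | linarith
      | exact hxy (by linarith)

lemma diag_of_crit (U : Matrix (Fin 3) (Fin 3) ℝ) (hU : Uᵀ * U = 1)
    (d : Fin 3 → ℝ) (hd : ∀ i, 0 < d i) (hdist : ∀ i j, i ≠ j → d i ≠ d j)
    (Q : Matrix (Fin 3) (Fin 3) ℝ) (hQ : SO3 Q)
    (hcrit : (U * Matrix.diagonal d * Uᵀ) * Q = Qᵀ * (U * Matrix.diagonal d * Uᵀ)) :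
    ∃ r : Fin 3 → ℝ, (∀ i, r i = 1 ∨ r i = -1) ∧ Q = U * Matrix.diagonal r * Uᵀ
      ∧ Uᵀ * Q * U = Matrix.diagonal r := by
  have hUU : U * Uᵀ = 1 := mul_eq_one_comm.mp hU
  set R : Matrix (Fin 3) (Fin 3) ℝ := Uᵀ * Q * U with hRdef
  have hQR : Q = U * R * Uᵀ := by
    rw [hRdef]
    calc Q = (U * Uᵀ) * Q * (U * Uᵀ) := by rw [hUU]; simp
    _ = U * (Uᵀ * Q * U) * Uᵀ := by noncomm_ring
  have hRT : Rᵀ = Uᵀ * Qᵀ * U := by rw [hRdef]; simp [Matrix.transpose_mul, Matrix.mul_assoc]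
  have hRo : Rᵀ * R = 1 := by
    rw [hRT, hRdef]
    calc (Uᵀ * Qᵀ * U) * (Uᵀ * Q * U) = Uᵀ * (Qᵀ * (U * Uᵀ) * Q) * U := by noncomm_ring
    _ = Uᵀ * (Qᵀ * Q) * U := by rw [hUU, Matrix.mul_one]
    _ = Uᵀ * U := by rw [hQ.1, Matrix.mul_one]
    _ = 1 := hU
  have hRo' : R * Rᵀ = 1 := mul_eq_one_comm.mp hRo
  have hDR : Matrix.diagonal d * R = Rᵀ * Matrix.diagonal d := by
    rw [hRdef, hRT]
    calc Matrix.diagonal d * (Uᵀ * Q * U)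
        = (Uᵀ * U) * Matrix.diagonal d * (Uᵀ * Q * U) := by rw [hU]; simp
      _ = Uᵀ * (U * Matrix.diagonal d * Uᵀ * Q) * U := by noncomm_ring
      _ = Uᵀ * (Qᵀ * (U * Matrix.diagonal d * Uᵀ)) * U := by rw [hcrit]
      _ = (Uᵀ * Qᵀ * U) * Matrix.diagonal d * (Uᵀ * U) := by noncomm_ring
      _ = (Uᵀ * Qᵀ * U) * Matrix.diagonal d := by rw [hU]; simp
  have hSS : (Matrix.diagonal d * R) * (Matrix.diagonal d * R)
      = Matrix.diagonal d * Matrix.diagonal d := by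
    nth_rewrite 2 [hDR]
    calc Matrix.diagonal d * R * (Rᵀ * Matrix.diagonal d)
        = Matrix.diagonal d * (R * Rᵀ) * Matrix.diagonal d := by noncomm_ring
      _ = _ := by rw [hRo']; simp
  have hcomm : (Matrix.diagonal d * R) * (Matrix.diagonal d * Matrix.diagonal d)
      = (Matrix.diagonal d * Matrix.diagonal d) * (Matrix.diagonal d * R) := by
    calc (Matrix.diagonal d * R) * (Matrix.diagonal d * Matrix.diagonal d)
        = (Matrix.diagonal d * R) * ((Matrix.diagonal d * R) * (Matrix.diagonal d * R)) := by
          rw [hSS]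
      _ = ((Matrix.diagonal d * R) * (Matrix.diagonal d * R)) * (Matrix.diagonal d * R) := by
          noncomm_ring
      _ = _ := by rw [hSS]
  have hRoff : ∀ i j, i ≠ j → R i j = 0 := by
    intro i j hij
    have h := congrFun (congrFun hcomm i) j
    simp only [Matrix.diagonal_mul_diagonal, Matrix.mul_diagonal, Matrix.diagonal_mul] at h
    have hne : d j * d j - d i * d i ≠ 0 := by
      intro hc
      have hfac : (d j - d i) * (d j + d i) = 0 := by nlinarith [hc]
      rcases mul_eq_zero.mp hfac with h'|h'
      · exact (hdist i j hij) (by linarith)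
      · linarith [hd i, hd j]
    have hz : (d i * R i j) * (d j * d j - d i * d i) = 0 := by nlinarith [h]
    rcases mul_eq_zero.mp hz with h'|h'
    · exact (mul_eq_zero.mp h').resolve_left (ne_of_gt (hd i))
    · exact absurd h' hne
  have hdiagR : R = Matrix.diagonal (fun i => R i i) := by
    ext a b
    by_cases hab : a = b
    · subst hab; simp
    · rw [Matrix.diagonal_apply_ne _ hab]; exact hRoff a b hab
  refine ⟨fun i => R i i, ?_, ?_, ?_⟩
  · intro i
    have h := congrFun (congrFun hRo i) i
    rw [hdiagR] at h
    simp [Matrix.diagonal_transpose, Matrix.diagonal_mul_diagonal, Matrix.diagonal_apply_eq,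
      Matrix.one_apply_eq] at h
    exact mul_self_eq_one_iff.mp h
  · rw [hQR, ← hdiagR]
  · exact hdiagR

/-- for `K = U_E diag(d) U_Eᵀ` symmetric positive definite with distinct
eigenvalues, `Q ↦ ⟨I − Q, K⟩` is a Morse function on `SO(3)`: every critical point
(`KQ = QᵀK`) is isolated among critical points, and the Hessian bilinear form
`(σ, σ') ↦ −⟨QᵀK, σ^× σ'^× + σ'^× σ^×⟩/2` there is nondegenerate. -/
theorem wahba_is_morse (UE : Matrix (Fin 3) (Fin 3) ℝ) (hUE : UEᵀ * UE = 1)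
    (d : Fin 3 → ℝ) (hd : ∀ i, 0 < d i) (hdist : ∀ i j, i ≠ j → d i ≠ d j)
    (K : Matrix (Fin 3) (Fin 3) ℝ) (hK : K = UE * Matrix.diagonal d * UEᵀ)
    (Q : Matrix (Fin 3) (Fin 3) ℝ) (hQ : SO3 Q) (hcrit : K * Q = Qᵀ * K) :
    (∃ ε > (0 : ℝ), ∀ Q' : Matrix (Fin 3) (Fin 3) ℝ, SO3 Q' → K * Q' = Q'ᵀ * K →
        (∀ i j, |Q' i j - Q i j| < ε) → Q' = Q) ∧
    (∀ σ : Fin 3 → ℝ, σ ≠ 0 → ∃ σ' : Fin 3 → ℝ,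
        -(((Qᵀ * K)ᵀ * (hat σ * hat σ' + hat σ' * hat σ)).trace) / 2 ≠ 0) := by
  have hUU : UE * UEᵀ = 1 := mul_eq_one_comm.mp hUE
  obtain ⟨r, hr, hQr, hdiag⟩ := diag_of_crit UE hUE d hd hdist Q hQ (by rw [← hK]; exact hcrit)
  constructor
  · refine ⟨1/9, by norm_num, ?_⟩
    intro Q' hQ' hcrit' hnear
    obtain ⟨r', hr', hQr', hdiag'⟩ :=
      diag_of_crit UE hUE d hd hdist Q' hQ' (by rw [← hK]; exact hcrit')
    suffices hrr : r' = r by rw [hQr', hrr, ← hQr]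
    by_contra hne
    obtain ⟨i, hi⟩ := Function.ne_iff.mp hne
    have hsq : ∀ k : Fin 3, UE k i * UE k i ≤ 1 := by
      have h1 := congrFun (congrFun hUE i) i
      simp [Matrix.mul_apply, Matrix.transpose_apply, Fin.sum_univ_three,
        Matrix.one_apply_eq] at h1
      have A0 : UE 0 i * UE 0 i ≤ 1 := by
        nlinarith [mul_self_nonneg (UE 1 i), mul_self_nonneg (UE 2 i)]
      have A1 : UE 1 i * UE 1 i ≤ 1 := by
        nlinarith [mul_self_nonneg (UE 0 i), mul_self_nonneg (UE 2 i)]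
      have A2 : UE 2 i * UE 2 i ≤ 1 := by
        nlinarith [mul_self_nonneg (UE 0 i), mul_self_nonneg (UE 1 i)]
      intro k
      fin_cases k <;> assumption
    have e1 : Matrix.diagonal r' i i = (UEᵀ * Q' * UE) i i := by rw [hdiag']
    have e2 : Matrix.diagonal r i i = (UEᵀ * Q * UE) i i := by rw [hdiag]
    simp [Matrix.mul_apply, Matrix.transpose_apply, Fin.sum_univ_three,
      Matrix.diagonal_apply_eq] at e1 e2
    have hsum : r' i - r i =
        UE 0 i * (Q' 0 0 - Q 0 0) * UE 0 i + UE 0 i * (Q' 0 1 - Q 0 1) * UE 1 i +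
        UE 0 i * (Q' 0 2 - Q 0 2) * UE 2 i + UE 1 i * (Q' 1 0 - Q 1 0) * UE 0 i +
        UE 1 i * (Q' 1 1 - Q 1 1) * UE 1 i + UE 1 i * (Q' 1 2 - Q 1 2) * UE 2 i +
        UE 2 i * (Q' 2 0 - Q 2 0) * UE 0 i + UE 2 i * (Q' 2 1 - Q 2 1) * UE 1 i +
        UE 2 i * (Q' 2 2 - Q 2 2) * UE 2 i := by linear_combination e1 - e2
    have B : ∀ k l : Fin 3, -(1/9) < UE k i * (Q' k l - Q k l) * UE l i ∧
        UE k i * (Q' k l - Q k l) * UE l i < 1/9 := fun k l =>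
      abs_lt.mp (tb _ _ _ (hsq k) (hsq l) (hnear k l))
    rcases hr' i with h1|h1 <;> rcases hr i with h2|h2 <;>
      first
        | exact hi (h1.trans h2.symm)
        | (rw [h1, h2] at hsum;
           linarith [(B 0 0).1, (B 0 0).2, (B 0 1).1, (B 0 1).2, (B 0 2).1, (B 0 2).2,
             (B 1 0).1, (B 1 0).2, (B 1 1).1, (B 1 1).2, (B 1 2).1, (B 1 2).2,
             (B 2 0).1, (B 2 0).2, (B 2 1).1, (B 2 1).2, (B 2 2).1, (B 2 2).2])
  · intro σ hσ
    set s : Fin 3 → ℝ := fun i => r i * d i with hs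
    have hN : Qᵀ * K = UE * Matrix.diagonal s * UEᵀ := by
      rw [hQr, hK]
      have hQT : (UE * Matrix.diagonal r * UEᵀ)ᵀ = UE * Matrix.diagonal r * UEᵀ := by
        simp [Matrix.transpose_mul, Matrix.mul_assoc]
      rw [hQT]
      calc (UE * Matrix.diagonal r * UEᵀ) * (UE * Matrix.diagonal d * UEᵀ)
          = UE * (Matrix.diagonal r * (UEᵀ * UE) * Matrix.diagonal d) * UEᵀ := by noncomm_ring
        _ = UE * (Matrix.diagonal r * Matrix.diagonal d) * UEᵀ := by
            rw [hUE, Matrix.mul_one]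
        _ = UE * Matrix.diagonal s * UEᵀ := by rw [Matrix.diagonal_mul_diagonal]
    have hNsym : (Qᵀ * K)ᵀ = Qᵀ * K := by
      rw [hN]; simp [Matrix.transpose_mul, Matrix.mul_assoc]
    have htr : (Qᵀ * K).trace = s 0 + s 1 + s 2 := by
      rw [hN, Matrix.trace_mul_cycle, hUE, Matrix.one_mul, Matrix.trace_diagonal]
      simp [Fin.sum_univ_three]
    set τ : Fin 3 → ℝ := UEᵀ *ᵥ σ with hτdef
    have hτ : τ ≠ 0 := by
      intro h
      apply hσ
      have h2 : UE *ᵥ τ = σ := by rw [hτdef, Matrix.mulVec_mulVec, hUU, Matrix.one_mulVec]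
      rw [h, Matrix.mulVec_zero] at h2; exact h2.symm
    set b : Fin 3 → ℝ := fun i => s 0 + s 1 + s 2 - s i with hbdef
    have hb : ∀ i, b i ≠ 0 := by
      have hb0 : b 0 = r 1 * d 1 + r 2 * d 2 := by
        show s 0 + s 1 + s 2 - s 0 = _
        show r 0 * d 0 + r 1 * d 1 + r 2 * d 2 - r 0 * d 0 = _
        ring
      have hb1 : b 1 = r 0 * d 0 + r 2 * d 2 := by
        show s 0 + s 1 + s 2 - s 1 = _
        show r 0 * d 0 + r 1 * d 1 + r 2 * d 2 - r 1 * d 1 = _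
        ring
      have hb2 : b 2 = r 0 * d 0 + r 1 * d 1 := by
        show s 0 + s 1 + s 2 - s 2 = _
        show r 0 * d 0 + r 1 * d 1 + r 2 * d 2 - r 2 * d 2 = _
        ring
      have n0 : b 0 ≠ 0 := by
        rw [hb0]; exact sum_ne _ _ _ _ (hd 1) (hd 2) (hdist 1 2 (by decide)) (hr 1) (hr 2)
      have n1 : b 1 ≠ 0 := by
        rw [hb1]; exact sum_ne _ _ _ _ (hd 0) (hd 2) (hdist 0 2 (by decide)) (hr 0) (hr 2)
      have n2 : b 2 ≠ 0 := by
        rw [hb2]; exact sum_ne _ _ _ _ (hd 0) (hd 1) (hdist 0 1 (by decide)) (hr 0) (hr 1)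
      intro i
      fin_cases i <;> assumption
    set w : Fin 3 → ℝ := fun i => b i * τ i with hwdef
    refine ⟨UE *ᵥ w, ?_⟩
    rw [hess_eq, hNsym]
    have hdot1 : σ ⬝ᵥ (UE *ᵥ w) = τ ⬝ᵥ w := by
      rw [Matrix.dotProduct_mulVec, hτdef, Matrix.mulVec_transpose]
    have hmm : (UE * Matrix.diagonal s * UEᵀ) * UE = UE * Matrix.diagonal s := by
      calc (UE * Matrix.diagonal s * UEᵀ) * UE
          = UE * Matrix.diagonal s * (UEᵀ * UE) := by noncomm_ring
        _ = _ := by rw [hUE, Matrix.mul_one]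
    have hmv : (Qᵀ * K) *ᵥ (UE *ᵥ w) = UE *ᵥ (Matrix.diagonal s *ᵥ w) := by
      rw [hN, Matrix.mulVec_mulVec, hmm, ← Matrix.mulVec_mulVec]
    have hdot2 : σ ⬝ᵥ ((Qᵀ * K) *ᵥ (UE *ᵥ w)) = τ ⬝ᵥ (Matrix.diagonal s *ᵥ w) := by
      rw [hmv, Matrix.dotProduct_mulVec, hτdef, Matrix.mulVec_transpose]
    rw [Matrix.add_mulVec, dotProduct_add, hdot1, hdot2, htr]
    have hexp : (τ ⬝ᵥ w) * (s 0 + s 1 + s 2)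
        - (τ ⬝ᵥ (Matrix.diagonal s *ᵥ w) + τ ⬝ᵥ (Matrix.diagonal s *ᵥ w)) / 2
        = (b 0 * τ 0)^2 + (b 1 * τ 1)^2 + (b 2 * τ 2)^2 := by
      have hw : ∀ i, w i = b i * τ i := fun i => rfl
      have hbv : ∀ i : Fin 3, b i = s 0 + s 1 + s 2 - s i := fun i => rfl
      simp only [dotProduct, Matrix.mulVec_diagonal, Fin.sum_univ_three, hw, hbv]
      ring
    rw [hexp]
    obtain ⟨j, hj⟩ := Function.ne_iff.mp hτ
    have hpos : 0 < (b j * τ j)^2 :=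
      lt_of_le_of_ne (sq_nonneg _) (Ne.symm (pow_ne_zero 2 (mul_ne_zero (hb j) hj)))
    have hj3 : j = 0 ∨ j = 1 ∨ j = 2 := by omega
    have h0 := sq_nonneg (b 0 * τ 0)
    have h1 := sq_nonneg (b 1 * τ 1)
    have h2 := sq_nonneg (b 2 * τ 2)
    have hsp : 0 < (b 0 * τ 0)^2 + (b 1 * τ 1)^2 + (b 2 * τ 2)^2 := by
      rcases hj3 with h|h|h <;> subst h <;> linarith
    exact ne_of_gt hsp
end

section
/- With K = U_E diag(d₁,d₂,d₃)U_Eᵀ, d₁ > d₂ > d₃ > 0, and Qᵢ = 2U_E aᵢ aᵢᵀ U_Eᵀ − I, the Hessians are H_K(Qᵢ) = U_E Λᵢ U_Eᵀ with Λ₁ = diag(−d₂−d₃, d₁−d₃, d₁−d₂), Λ₂ = diag(d₂−d₃, −d₃−d₁, d₂−d₁), Λ₃ = diag(d₃−d₂, d₃−d₁, −d₁−d₂); consequently Q₁ has Morse index 1, Q₂ index 2, and Q₃ index 3 (global maximum). -/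
open Matrix

/-!
Conjugation by an orthogonal `U` preserves transposes, products, traces and `1`, so it commutes
with `H_K(Q) = trace(QᵀK) I − QᵀK`. This reduces everything to `K = diag d` and the sign matrix
`Qᵢ = 2 aᵢaᵢᵀ − I = diag s`, where `H` is diagonal with entries `∑ₖ sₖdₖ − sⱼdⱼ`.
-/

variable {n R : Type*} [DecidableEq n] [CommRing R]

lemma two_smul_single_sub_one (i : n) :
    (2 • single i i 1 - 1 : Matrix n n R) = diagonal fun j => if j = i then 1 else -1 := by
  ext a b
  simp only [Matrix.sub_apply, Matrix.smul_apply, single_apply, one_apply, diagonal_apply]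
  split_ifs <;> grind

variable [Fintype n]

def hessianAt (K Q : Matrix n n R) : Matrix n n R := (Qᵀ * K).trace • 1 - Qᵀ * K

lemma hessianAt_diagonal (d s : n → R) :
    hessianAt (diagonal d) (diagonal s) = diagonal fun j => ∑ k, s k * d k - s j * d j := by
  ext i j
  by_cases hij : i = j
  · subst hij
    simp [hessianAt, trace_diagonal]
  · simp [hessianAt, hij]

section Orthogonal

variable {U : Matrix n n R}

lemma conj_mul_conj (hU : Uᵀ * U = 1) (A B : Matrix n n R) :
    U * A * Uᵀ * (U * B * Uᵀ) = U * (A * B) * Uᵀ := by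
  simp only [Matrix.mul_assoc]
  rw [← Matrix.mul_assoc Uᵀ U, hU, Matrix.one_mul]

lemma trace_conj (hU : Uᵀ * U = 1) (A : Matrix n n R) : (U * A * Uᵀ).trace = A.trace := by
  rw [trace_mul_comm, ← Matrix.mul_assoc, hU, Matrix.one_mul]

lemma conj_smul_one (hU : Uᵀ * U = 1) (c : R) : U * (c • 1) * Uᵀ = c • 1 := by
  rw [Matrix.mul_smul, Matrix.mul_one, Matrix.smul_mul, mul_eq_one_comm.mp hU]

lemma hessianAt_conj (hU : Uᵀ * U = 1) (K Q : Matrix n n R) :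
    hessianAt (U * K * Uᵀ) (U * Q * Uᵀ) = U * hessianAt K Q * Uᵀ := by
  have hT : (U * Q * Uᵀ)ᵀ = U * Qᵀ * Uᵀ := by
    rw [transpose_mul, transpose_mul, transpose_transpose, Matrix.mul_assoc]
  rw [hessianAt, hessianAt, hT, conj_mul_conj hU, trace_conj hU, Matrix.mul_sub,
    Matrix.sub_mul, conj_smul_one hU]

lemma nsmul_conj_sub_one (hU : Uᵀ * U = 1) (m : ℕ) (A : Matrix n n R) :
    m • (U * A * Uᵀ) - 1 = U * (m • A - 1) * Uᵀ := by
  rw [Matrix.mul_sub, Matrix.sub_mul, Matrix.mul_one, mul_eq_one_comm.mp hU, Matrix.mul_smul,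
    Matrix.smul_mul]

lemma hessianAt_conj_reflection (hU : Uᵀ * U = 1) (d : n → R) (i : n) :
    hessianAt (U * diagonal d * Uᵀ) (2 • (U * single i i 1 * Uᵀ) - 1) =
      U * diagonal (fun j => ∑ k, (if k = i then 1 else -1) * d k -
        (if j = i then 1 else -1) * d j) * Uᵀ := by
  rw [nsmul_conj_sub_one hU, two_smul_single_sub_one, hessianAt_conj hU, hessianAt_diagonal]

end Orthogonal

/-- with `K = U_E diag(d₁,d₂,d₃) U_Eᵀ`, `d₁ > d₂ > d₃ > 0`, and
`Qᵢ = 2 U_E aᵢ aᵢᵀ U_Eᵀ − I`, the Hessians `H_K(Qᵢ) = trace(QᵢᵀK) I − QᵢᵀK` satisfy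
`H_K(Qᵢ) = U_E Λᵢ U_Eᵀ` with
`Λ₁ = diag(−d₂−d₃, d₁−d₃, d₁−d₂)`, `Λ₂ = diag(d₂−d₃, −d₃−d₁, d₂−d₁)`,
`Λ₃ = diag(d₃−d₂, d₃−d₁, −d₁−d₂)`; consequently (counting negative eigenvalues)
`Q₁` has Morse index 1, `Q₂` index 2, and `Q₃` index 3 (the global maximum). -/
theorem hessians_at_saddles (UE : Matrix (Fin 3) (Fin 3) ℝ) (hUE : UEᵀ * UE = 1)
    (d : Fin 3 → ℝ) (hd : d 0 > d 1 ∧ d 1 > d 2 ∧ d 2 > 0)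
    (K : Matrix (Fin 3) (Fin 3) ℝ) (hK : K = UE * Matrix.diagonal d * UEᵀ)
    (Q₁ Q₂ Q₃ : Matrix (Fin 3) (Fin 3) ℝ)
    (hQ₁ : Q₁ = 2 • (UE * Matrix.single 0 0 (1 : ℝ) * UEᵀ) - 1)
    (hQ₂ : Q₂ = 2 • (UE * Matrix.single 1 1 (1 : ℝ) * UEᵀ) - 1)
    (hQ₃ : Q₃ = 2 • (UE * Matrix.single 2 2 (1 : ℝ) * UEᵀ) - 1) :
    ((Q₁ᵀ * K).trace • (1 : Matrix (Fin 3) (Fin 3) ℝ) - Q₁ᵀ * K =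
        UE * Matrix.diagonal ![-(d 1) - d 2, d 0 - d 2, d 0 - d 1] * UEᵀ) ∧
    ((Q₂ᵀ * K).trace • (1 : Matrix (Fin 3) (Fin 3) ℝ) - Q₂ᵀ * K =
        UE * Matrix.diagonal ![d 1 - d 2, -(d 2) - d 0, d 1 - d 0] * UEᵀ) ∧
    ((Q₃ᵀ * K).trace • (1 : Matrix (Fin 3) (Fin 3) ℝ) - Q₃ᵀ * K =
        UE * Matrix.diagonal ![d 2 - d 1, d 2 - d 0, -(d 0) - d 1] * UEᵀ) ∧
    -- Morse index 1 for Q₁: exactly one negative diagonal entry of Λ₁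
    (-(d 1) - d 2 < 0 ∧ 0 < d 0 - d 2 ∧ 0 < d 0 - d 1) ∧
    -- Morse index 2 for Q₂
    (0 < d 1 - d 2 ∧ -(d 2) - d 0 < 0 ∧ d 1 - d 0 < 0) ∧
    -- Morse index 3 for Q₃ (global maximum)
    (d 2 - d 1 < 0 ∧ d 2 - d 0 < 0 ∧ -(d 0) - d 1 < 0) := by
  obtain ⟨h01, h12, h2⟩ := hd
  subst hK hQ₁ hQ₂ hQ₃
  refine ⟨?_, ?_, ?_, ⟨by linarith, by linarith, by linarith⟩,
    ⟨by linarith, by linarith, by linarith⟩, ⟨by linarith, by linarith, by linarith⟩⟩ <;>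
  · refine (hessianAt_conj_reflection hUE d _).trans ?_
    refine congrArg (fun v => UE * diagonal v * UEᵀ) (funext fun j => ?_)
    fin_cases j <;> simp [Fin.sum_univ_three] <;> ring
end

section
/- For K symmetric positive definite, ⟨I−Q,K⟩ ≥ 0 for all Q ∈ SO(3), with equality if and only if Q = I. -/
/-!
Put `M = 1 - Q`. Orthogonality of `Q` gives `M Mᵀ = M + Mᵀ`, so for symmetric `K`,
`tr (Mᵀ K M) = tr ((M + Mᵀ) K) = 2 tr (Mᵀ K)`. The left side is the trace of the positive
semidefinite matrix `Mᵀ K M`, hence nonnegative, and as `K` is positive definite it vanishes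
only if `M = 0`.
-/

open Matrix

namespace Matrix

variable {m n R 𝕜 : Type*} [Fintype m] [Fintype n]

theorem one_sub_mul_transpose_one_sub [DecidableEq n] [CommRing R] {Q : Matrix n n R}
    (hQ : Qᵀ * Q = 1) : (1 - Q) * (1 - Q)ᵀ = (1 - Q) + (1 - Q)ᵀ := by
  have hQQ : Q * Qᵀ = 1 := mul_eq_one_comm.mp hQ
  simp only [transpose_sub, transpose_one, sub_mul, mul_sub, one_mul, mul_one, hQQ]
  abel

theorem trace_transpose_mul_of_isSymm [CommRing R] (M : Matrix n n R) {K : Matrix n n R}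
    (hK : K.IsSymm) : (Mᵀ * K).trace = (M * K).trace := by
  rw [← trace_transpose, transpose_mul, transpose_transpose, hK.eq, trace_mul_comm]

theorem trace_one_sub_transpose_mul_mul_one_sub [DecidableEq n] [CommRing R] {Q K : Matrix n n R}
    (hQ : Qᵀ * Q = 1) (hK : K.IsSymm) :
    ((1 - Q)ᵀ * K * (1 - Q)).trace = 2 * ((1 - Q)ᵀ * K).trace := by
  calc ((1 - Q)ᵀ * K * (1 - Q)).trace = ((1 - Q) * (1 - Q)ᵀ * K).trace := by
        rw [trace_mul_comm, Matrix.mul_assoc]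
    _ = ((1 - Q) * K).trace + ((1 - Q)ᵀ * K).trace := by
        rw [one_sub_mul_transpose_one_sub hQ, add_mul, trace_add]
    _ = 2 * ((1 - Q)ᵀ * K).trace := by
        rw [trace_transpose_mul_of_isSymm _ hK]; ring

open scoped ComplexOrder in
theorem PosDef.trace_conjTranspose_mul_mul_same_eq_zero_iff [RCLike 𝕜] {K : Matrix n n 𝕜}
    (hK : K.PosDef) (B : Matrix n m 𝕜) : (Bᴴ * K * B).trace = 0 ↔ B = 0 := by
  rw [(hK.posSemidef.conjTranspose_mul_mul_same B).trace_eq_zero_iff]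
  refine ⟨fun h ↦ ?_, fun h ↦ by simp [h]⟩
  ext i j
  have hcol : star (Bᵀ j) ⬝ᵥ (K *ᵥ Bᵀ j) = 0 := by
    have hjj : (Bᴴ * K * B) j j = star (Bᵀ j) ⬝ᵥ (K *ᵥ Bᵀ j) := by
      simp only [mul_apply, dotProduct, mulVec, Finset.mul_sum, Finset.sum_mul, mul_assoc]
      exact Finset.sum_comm
    rw [← hjj, h, zero_apply]
  by_contra hne
  have := hK.dotProduct_mulVec_pos (x := Bᵀ j) fun h0 ↦ hne (by simpa using congrFun h0 i)
  exact this.ne' hcol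

end Matrix

/-- for `K` symmetric positive definite, `⟨I−Q,K⟩ ≥ 0` for all `Q ∈ SO(3)`,
with equality iff `Q = I`. -/
theorem wahba_nonneg (K : Matrix (Fin 3) (Fin 3) ℝ) (hK : K.PosDef)
    (Q : Matrix (Fin 3) (Fin 3) ℝ) (hQ : SO3 Q) :
    0 ≤ ((1 - Q)ᵀ * K).trace ∧ (((1 - Q)ᵀ * K).trace = 0 ↔ Q = 1) := by
  have hquad := trace_one_sub_transpose_mul_mul_one_sub hQ.1
    (isHermitian_iff_isSymm.mp hK.isHermitian)
  rw [← conjTranspose_eq_transpose_of_trivial] at hquad ⊢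
  refine ⟨?_, ?_⟩
  · linarith [(hK.posSemidef.conjTranspose_mul_mul_same (1 - Q)).trace_nonneg]
  · rw [← mul_eq_zero_iff_left two_ne_zero, ← hquad,
      hK.trace_conjTranspose_mul_mul_same_eq_zero_iff, sub_eq_zero, eq_comm]
end

section
/- Consider V(Q,ω) = Φ(⟨I−Q,K⟩) + (m/2)ωᵀω along the noise-free filter dynamics R̂̇ = R̂Ω̂^×, mω̇ = −mΩ̂×ω + Φ'(⟨I−Q,K⟩)S_L(R̂) − Dω, with D positive definite. Then V̇ = −ωᵀDω ≤ 0. -/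
/-!
Along the flow, `Q = R R̂ᵀ` moves only through `R ω^× R̂ᵀ`, so `⟨I - Q, K⟩` changes at rate
`-tr(ω^× Rᵀ K R̂)`; for symmetric `K` this trace is `ωᵀ vex` of the skew part of `Rᵀ K R̂`, which is
exactly `ωᵀ S_L(R̂)`. The potential thus contributes `-Φ' ωᵀ S_L`, cancelling the `Φ' S_L` term of
`ωᵀ (m ω̇)`; the gyroscopic term `Ω̂ × ω` is orthogonal to `ω`, and only `-ωᵀ D ω` is left.
-/

open Matrix

attribute [local instance] Matrix.normedAddCommGroup Matrix.normedSpace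

/-- The vex map, inverse of the hat map on skew-symmetric matrices. -/
def vex (A : Matrix (Fin 3) (Fin 3) ℝ) : Fin 3 → ℝ :=
  ![A 2 1, A 0 2, A 1 0]

section MatrixCalculus

variable {𝕜 : Type*} [NontriviallyNormedField 𝕜] {l m n : Type*} {t : 𝕜}

theorem hasDerivAt_matrix_iff [Fintype n] {A : 𝕜 → Matrix m n 𝕜} {A' : Matrix m n 𝕜} :
    HasDerivAt A A' t ↔ ∀ i j, HasDerivAt (fun s => A s i j) (A' i j) t :=
  hasDerivAt_pi.trans (forall_congr' fun _ => hasDerivAt_pi)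

theorem HasDerivAt.matrix_transpose [Fintype m] [Fintype n] {A : 𝕜 → Matrix m n 𝕜}
    {A' : Matrix m n 𝕜} (hA : HasDerivAt A A' t) : HasDerivAt (fun s => (A s)ᵀ) A'ᵀ t :=
  hasDerivAt_matrix_iff.2 fun i j => hasDerivAt_matrix_iff.1 hA j i

theorem HasDerivAt.matrix_mul [Fintype l] [Fintype m] [Fintype n]
    {A : 𝕜 → Matrix l m 𝕜} {B : 𝕜 → Matrix m n 𝕜}
    {A' : Matrix l m 𝕜} {B' : Matrix m n 𝕜} (hA : HasDerivAt A A' t) (hB : HasDerivAt B B' t) :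
    HasDerivAt (fun s => A s * B s) (A' * B t + A t * B') t := by
  refine hasDerivAt_matrix_iff.2 fun i j => ?_
  have := HasDerivAt.fun_sum (u := Finset.univ) fun k _ =>
    (hasDerivAt_matrix_iff.1 hA i k).mul (hasDerivAt_matrix_iff.1 hB k j)
  simpa only [Matrix.add_apply, mul_apply, Finset.sum_add_distrib, Pi.mul_apply] using this

theorem HasDerivAt.matrix_trace [Fintype n] {A : 𝕜 → Matrix n n 𝕜} {A' : Matrix n n 𝕜}
    (hA : HasDerivAt A A' t) : HasDerivAt (fun s => (A s).trace) A'.trace t :=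
  HasDerivAt.fun_sum fun i _ => hasDerivAt_matrix_iff.1 hA i i

theorem HasDerivAt.dotProduct [Fintype n] {v w : 𝕜 → n → 𝕜} {v' w' : n → 𝕜}
    (hv : HasDerivAt v v' t) (hw : HasDerivAt w w' t) :
    HasDerivAt (fun s => v s ⬝ᵥ w s) (v' ⬝ᵥ w t + v t ⬝ᵥ w') t := by
  have := HasDerivAt.fun_sum (u := Finset.univ) fun i _ =>
    (hasDerivAt_pi.1 hv i).mul (hasDerivAt_pi.1 hw i)
  simpa only [_root_.dotProduct, Finset.sum_add_distrib, Pi.mul_apply] using this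

end MatrixCalculus

theorem hat_transpose (v : Fin 3 → ℝ) : (hat v)ᵀ = -hat v := by
  ext i j
  fin_cases i <;> fin_cases j <;> simp [hat]

theorem hat_sub (v w : Fin 3 → ℝ) : hat (v - w) = hat v - hat w := by
  ext i j
  fin_cases i <;> fin_cases j <;> simp [hat] <;> ring

theorem hat_mulVec (v w : Fin 3 → ℝ) : hat v *ᵥ w = v ⨯₃ w := by
  ext i
  fin_cases i <;> simp [hat, mulVec, dotProduct, Fin.sum_univ_three, cross_apply] <;> ring

theorem trace_hat_mul (w : Fin 3 → ℝ) (M : Matrix (Fin 3) (Fin 3) ℝ) :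
    (hat w * M).trace = w ⬝ᵥ vex (Mᵀ - M) := by
  simp [hat, vex, trace, dotProduct, Fin.sum_univ_three, vecMul]
  ring

theorem trace_attitude_error_rate {K : Matrix (Fin 3) (Fin 3) ℝ} (hK : Kᵀ = K)
    (R Rhat : Matrix (Fin 3) (Fin 3) ℝ) (Ω Ωhat : Fin 3 → ℝ) :
    ((R * hat Ω * Rhatᵀ + R * (Rhat * hat Ωhat)ᵀ)ᵀ * K).trace =
      (Ω - Ωhat) ⬝ᵥ vex ((K * R)ᵀ * Rhat - Rhatᵀ * (K * R)) := by
  have hX : R * hat Ω * Rhatᵀ + R * (Rhat * hat Ωhat)ᵀ = R * hat (Ω - Ωhat) * Rhatᵀ := by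
    rw [hat_sub, transpose_mul, hat_transpose]
    noncomm_ring
  calc ((R * hat Ω * Rhatᵀ + R * (Rhat * hat Ωhat)ᵀ)ᵀ * K).trace
      = (K * R * hat (Ω - Ωhat) * Rhatᵀ).trace := by
        rw [hX, ← trace_transpose, transpose_mul, transpose_transpose, hK]
        simp only [Matrix.mul_assoc]
    _ = (hat (Ω - Ωhat) * (Rhatᵀ * (K * R))).trace := by
        rw [trace_mul_cycle, trace_mul_comm]
    _ = (Ω - Ωhat) ⬝ᵥ vex ((K * R)ᵀ * Rhat - Rhatᵀ * (K * R)) := by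
        rw [trace_hat_mul, transpose_mul, transpose_transpose]

theorem hasDerivAt_trace_attitude_error {K : Matrix (Fin 3) (Fin 3) ℝ} (hK : Kᵀ = K)
    {R Rhat : ℝ → Matrix (Fin 3) (Fin 3) ℝ} {Ω Ωhat : Fin 3 → ℝ} {t : ℝ}
    (hR : HasDerivAt R (R t * hat Ω) t) (hRhat : HasDerivAt Rhat (Rhat t * hat Ωhat) t) :
    HasDerivAt (fun s => ((1 - R s * (Rhat s)ᵀ)ᵀ * K).trace)
      (-((Ω - Ωhat) ⬝ᵥ vex ((K * R t)ᵀ * Rhat t - (Rhat t)ᵀ * (K * R t)))) t := by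
  rw [← trace_attitude_error_rate hK, ← trace_neg, ← Matrix.neg_mul, ← transpose_neg]
  simpa only [Matrix.mul_zero, add_zero] using
    (((hR.matrix_mul hRhat.matrix_transpose).const_sub 1).matrix_transpose.matrix_mul
      (hasDerivAt_const t K)).matrix_trace

theorem lyapunov_decrease_general (k : ℕ) (E : Matrix (Fin 3) (Fin k) ℝ)
    (W : Matrix (Fin k) (Fin k) ℝ) (hW : W.PosDef)
    (m : ℝ) (D : Matrix (Fin 3) (Fin 3) ℝ)
    (Φ : ℝ → ℝ) (hΦ : Differentiable ℝ Φ)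
    (R Rhat : ℝ → Matrix (Fin 3) (Fin 3) ℝ) (Ω Ωhat ω ω' : ℝ → Fin 3 → ℝ)
    (hω : ∀ t, ω t = Ω t - Ωhat t)
    (hRdot : ∀ t, HasDerivAt R (R t * hat (Ω t)) t)
    (hRhatdot : ∀ t, HasDerivAt Rhat (Rhat t * hat (Ωhat t)) t)
    (hωdot : ∀ t, HasDerivAt ω (ω' t) t)
    (hdyn : ∀ t, m • ω' t =
      -(m • (hat (Ωhat t) *ᵥ ω t)) +
      deriv Φ (((1 - R t * (Rhat t)ᵀ)ᵀ * (E * W * Eᵀ)).trace) •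
        vex ((E * W * ((R t)ᵀ * E)ᵀ)ᵀ * Rhat t - (Rhat t)ᵀ * (E * W * ((R t)ᵀ * E)ᵀ)) -
      D *ᵥ ω t)
    (t₀ : ℝ) :
    HasDerivAt
      (fun t => Φ (((1 - R t * (Rhat t)ᵀ)ᵀ * (E * W * Eᵀ)).trace) + (m / 2) * (ω t ⬝ᵥ ω t))
      (-(ω t₀ ⬝ᵥ (D *ᵥ ω t₀))) t₀ := by
  have hK : (E * W * Eᵀ)ᵀ = E * W * Eᵀ := by
    simpa using (isHermitian_mul_mul_conjTranspose E hW.1).eq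
  set K := E * W * Eᵀ
  have hL : E * W * ((R t₀)ᵀ * E)ᵀ = K * R t₀ := by
    rw [transpose_mul, transpose_transpose]
    simp only [K, Matrix.mul_assoc]
  have hpot := (hΦ _).hasDerivAt.comp t₀
    (hasDerivAt_trace_attitude_error hK (hRdot t₀) (hRhatdot t₀))
  have hkin := ((hωdot t₀).dotProduct (hωdot t₀)).const_mul (m / 2)
  have hkin_eq : m / 2 * (ω' t₀ ⬝ᵥ ω t₀ + ω t₀ ⬝ᵥ ω' t₀) = ω t₀ ⬝ᵥ (m • ω' t₀) := by
    rw [dotProduct_comm (ω' t₀), dotProduct_smul, smul_eq_mul]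
    ring
  refine (hpot.add hkin).congr_deriv ?_
  rw [hkin_eq, hdyn t₀, hL, ← hω t₀]
  simp only [dotProduct_add, dotProduct_sub, dotProduct_neg, dotProduct_smul, hat_mulVec,
    dot_cross_self, smul_eq_mul]
  ring

/-- for `V(Q,ω) = Φ(⟨I−Q,K⟩) + (m/2) ωᵀω` along the noise-free filter
dynamics `dR̂/dt = R̂ Ω̂^×`, `m ω̇ = −m Ω̂ × ω + Φ'(⟨I−Q,K⟩) S_L(R̂) − D ω` (with `Ṙ = R Ω^×`,
`Q = R R̂ᵀ`, `ω = Ω − Ω̂`, `K = E W Eᵀ`, `L = E W Uᵀ`, `U = RᵀE`, `D` positive definite),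
one has `V̇ = −ωᵀ D ω`. -/
theorem lyapunov_decrease (k : ℕ) (E : Matrix (Fin 3) (Fin k) ℝ)
    (W : Matrix (Fin k) (Fin k) ℝ) (hW : W.PosDef)
    (m : ℝ) (hm : 0 < m) (D : Matrix (Fin 3) (Fin 3) ℝ) (hD : D.PosDef)
    (Φ : ℝ → ℝ) (hΦ : Differentiable ℝ Φ)
    (R Rhat : ℝ → Matrix (Fin 3) (Fin 3) ℝ) (Ω Ωhat ω ω' : ℝ → Fin 3 → ℝ)
    (hR : ∀ t, SO3 (R t)) (hRhat : ∀ t, SO3 (Rhat t))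
    (hω : ∀ t, ω t = Ω t - Ωhat t)
    (hRdot : ∀ t, HasDerivAt R (R t * hat (Ω t)) t)
    (hRhatdot : ∀ t, HasDerivAt Rhat (Rhat t * hat (Ωhat t)) t)
    (hωdot : ∀ t, HasDerivAt ω (ω' t) t)
    (hdyn : ∀ t, m • ω' t =
      -(m • (hat (Ωhat t) *ᵥ ω t)) +
      deriv Φ (((1 - R t * (Rhat t)ᵀ)ᵀ * (E * W * Eᵀ)).trace) •
        vex ((E * W * ((R t)ᵀ * E)ᵀ)ᵀ * Rhat t - (Rhat t)ᵀ * (E * W * ((R t)ᵀ * E)ᵀ)) -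
      D *ᵥ ω t)
    (t₀ : ℝ) :
    HasDerivAt
      (fun t => Φ (((1 - R t * (Rhat t)ᵀ)ᵀ * (E * W * Eᵀ)).trace) + (m / 2) * (ω t ⬝ᵥ ω t))
      (-(ω t₀ ⬝ᵥ (D *ᵥ ω t₀))) t₀ :=
  lyapunov_decrease_general k E W hW m D Φ hΦ R Rhat Ω Ωhat ω ω' hω hRdot hRhatdot hωdot hdyn t₀
end

section
/- The explicit discrete-time update (R̂_{i+1} = R̂ᵢ exp(h Ω̂_{i+1}^×) variant with ω_{i+1} = (mI + hD)^{-1}[exp(−hΩ̂ᵢ^×) m ωᵢ + h Φ'(𝒰⁰ᵢ) S_{Lᵢ}(R̂ᵢ)]) is the adjoint integrator of the implicit scheme m ω_{i+1} = exp(−hΩ̂_{i+1}^×)[(mI − hD)ωᵢ + h Φ'(𝒰⁰_{i+1}) S_{L_{i+1}}(R̂_{i+1})], R̂_{i+1} = R̂ᵢ exp(hΩ̂ᵢ^×): that is, the explicit map is obtained from the implicit map Ξ_h by Ξ*_h = Ξ_{−h}^{-1} (swap indices i ↔ i+1 and replace h by −h). -/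
/-!
Both schemes have the form `R₁ = R₀ E`, `M ω₁ = F (m ω₀) + h S₀(R₀)` with `E`, `F` matrix
exponentials and `M = mI + hD` invertible. Since `exp (-X) = (exp X)⁻¹`, replacing `h` by `-h`
in the implicit scheme and solving it for the other endpoint reproduces the explicit one: the
equivalence is just the invertibility of `E`, `F` and `M`.
-/

open Matrix

section

variable {n : Type*} [Fintype n] [DecidableEq n]

theorem Matrix.eq_nonsing_inv_mulVec_iff {α : Type*} [CommRing α] {A : Matrix n n α}
    (hA : IsUnit A.det) {u v : n → α} : v = A⁻¹ *ᵥ u ↔ A *ᵥ v = u := by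
  constructor
  · rintro rfl
    rw [mulVec_mulVec, mul_nonsing_inv _ hA, one_mulVec]
  · rintro rfl
    rw [mulVec_mulVec, nonsing_inv_mul _ hA, one_mulVec]

variable {𝔸 : Type*} [NormedCommRing 𝔸] [NormedAlgebra ℚ 𝔸] [CompleteSpace 𝔸]

theorem Matrix.isUnit_det_exp (A : Matrix n n 𝔸) : IsUnit (NormedSpace.exp A).det :=
  (isUnit_iff_isUnit_det _).1 (isUnit_exp A)

theorem Matrix.eq_mul_exp_iff_eq_mul_exp_neg (R₀ R₁ A : Matrix n n 𝔸) :
    R₁ = R₀ * NormedSpace.exp A ↔ R₀ = R₁ * NormedSpace.exp (-A) := by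
  obtain ⟨u, hu⟩ := isUnit_exp A
  rw [exp_neg, ← hu, ← coe_units_inv, Units.eq_mul_inv_iff_mul_eq]
  exact eq_comm

end

theorem explicit_is_adjoint_of_implicit_general
    (h m : ℝ) (D : Matrix (Fin 3) (Fin 3) ℝ)
    (S₀ : Matrix (Fin 3) (Fin 3) ℝ → Fin 3 → ℝ)
    (Ωm₀ Ωm₁ : Fin 3 → ℝ) (R₀ R₁ : Matrix (Fin 3) (Fin 3) ℝ) (ω₀ ω₁ : Fin 3 → ℝ)
    (hinv : IsUnit (m • (1 : Matrix (Fin 3) (Fin 3) ℝ) + h • D).det) :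
    -- explicit (adjoint) update from (R₀,ω₀) to (R₁,ω₁)
    (R₁ = R₀ * NormedSpace.exp (h • hat (Ωm₁ - ω₁)) ∧
     ω₁ = (m • (1 : Matrix (Fin 3) (Fin 3) ℝ) + h • D)⁻¹ *ᵥ
       (NormedSpace.exp (-(h • hat (Ωm₀ - ω₀))) *ᵥ (m • ω₀) + h • S₀ R₀))
    ↔
    -- implicit scheme `Ξ_{−h}` mapping (R₁,ω₁) back to (R₀,ω₀) (indices swapped, h ↦ −h)
    (R₀ = R₁ * NormedSpace.exp ((-h) • hat (Ωm₁ - ω₁)) ∧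
     m • ω₀ = NormedSpace.exp (-((-h) • hat (Ωm₀ - ω₀))) *ᵥ
       ((m • (1 : Matrix (Fin 3) (Fin 3) ℝ) - (-h) • D) *ᵥ ω₁ + (-h) • S₀ R₀)) := by
  set M := m • (1 : Matrix (Fin 3) (Fin 3) ℝ) + h • D
  set B := h • hat (Ωm₀ - ω₀)
  simp only [neg_smul, neg_neg, sub_neg_eq_add, ← sub_eq_add_neg]
  refine and_congr (eq_mul_exp_iff_eq_mul_exp_neg _ _ _) ?_
  calc ω₁ = M⁻¹ *ᵥ (NormedSpace.exp (-B) *ᵥ (m • ω₀) + h • S₀ R₀)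
        ↔ M *ᵥ ω₁ = NormedSpace.exp (-B) *ᵥ (m • ω₀) + h • S₀ R₀ :=
          eq_nonsing_inv_mulVec_iff hinv
    _ ↔ (NormedSpace.exp B)⁻¹ *ᵥ (m • ω₀) = M *ᵥ ω₁ - h • S₀ R₀ := by
          rw [exp_neg, eq_sub_iff_add_eq, eq_comm]
    _ ↔ m • ω₀ = NormedSpace.exp B *ᵥ (M *ᵥ ω₁ - h • S₀ R₀) := by
          rw [eq_comm, eq_nonsing_inv_mulVec_iff (isUnit_det_exp B), eq_comm]

/-- the explicit discrete-time update
`R̂₁ = R̂₀ exp(h (Ωᵐ₁ − ω₁)^×)`,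
`ω₁ = (mI + hD)⁻¹ [exp(−h (Ωᵐ₀ − ω₀)^×) (m ω₀) + h S₀(R̂₀)]`
is the adjoint `Ξ*_h = Ξ_{−h}⁻¹` of the implicit scheme
`R̂_{i+1} = R̂ᵢ exp(h Ω̂ᵢ^×)`,
`m ω_{i+1} = exp(−h Ω̂_{i+1}^×)[(mI − hD) ωᵢ + h S_{i+1}(R̂_{i+1})]`:
i.e., for fixed external data (`Ωᵐ` at the two steps, and the gradient terms
`S₀, S₁` — with `Sᵢ = Φ'(𝒰⁰ᵢ) S_{Lᵢ}`), the pair `((R̂₀,ω₀), (R̂₁,ω₁))` satisfies the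
explicit update iff it satisfies the implicit update with indices `0 ↔ 1` swapped and
`h` replaced by `−h`. -/
theorem explicit_is_adjoint_of_implicit
    (h m : ℝ) (hm : 0 < m) (D : Matrix (Fin 3) (Fin 3) ℝ) (hD : D.PosDef)
    (S₀ S₁ : Matrix (Fin 3) (Fin 3) ℝ → Fin 3 → ℝ)
    (Ωm₀ Ωm₁ : Fin 3 → ℝ) (R₀ R₁ : Matrix (Fin 3) (Fin 3) ℝ) (ω₀ ω₁ : Fin 3 → ℝ)
    (hinv : IsUnit (m • (1 : Matrix (Fin 3) (Fin 3) ℝ) + h • D).det) :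
    -- explicit (adjoint) update from (R₀,ω₀) to (R₁,ω₁)
    (R₁ = R₀ * NormedSpace.exp (h • hat (Ωm₁ - ω₁)) ∧
     ω₁ = (m • (1 : Matrix (Fin 3) (Fin 3) ℝ) + h • D)⁻¹ *ᵥ
       (NormedSpace.exp (-(h • hat (Ωm₀ - ω₀))) *ᵥ (m • ω₀) + h • S₀ R₀))
    ↔
    -- implicit scheme `Ξ_{−h}` mapping (R₁,ω₁) back to (R₀,ω₀) (indices swapped, h ↦ −h)
    (R₀ = R₁ * NormedSpace.exp ((-h) • hat (Ωm₁ - ω₁)) ∧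
     m • ω₀ = NormedSpace.exp (-((-h) • hat (Ωm₀ - ω₀))) *ᵥ
       ((m • (1 : Matrix (Fin 3) (Fin 3) ℝ) - (-h) • D) *ᵥ ω₁ + (-h) • S₀ R₀)) :=
  explicit_is_adjoint_of_implicit_general h m D S₀ Ωm₀ Ωm₁ R₀ R₁ ω₀ ω₁ hinv
end
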